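/- Let UJ_n carry a G-grading in which, for every admissible i and for m = 0 and m = 1, the nonzero elements Y⁺_{i:m} and Y⁻_{i:m} are homogeneous and deg Y⁺_{i:m} ≠ deg Y⁻_{i:m} whenever both are nonzero. Then the grading is MT: for all admissible i and all m ≥ 0, the nonzero elements Y⁺_{i:m} and Y⁻_{i:m} are homogeneous with deg Y⁺_{i:m} ≠ deg Y⁻_{i:m} whenever both are nonzero. -/

import Mathlib

open Matrix

/-- The submodule of upper triangular `n × n` matrices over `K`. -/
def UTs (K : Type*) [Field K] (n : ℕ) : Submodule K (Matrix (Fin n) (Fin n) K) where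
  carrier := {M | ∀ i j : Fin n, (j : ℕ) < (i : ℕ) → M i j = 0}
  add_mem' := by
    intro a b ha hb i j h
    simp [ha i j h, hb i j h]
  zero_mem' := by
    intro i j h
    simp
  smul_mem' := by
    intro c a ha i j h
    simp [ha i j h]

/-- `UJ K n` : the underlying space of the Jordan algebra of upper triangular matrices. -/
abbrev UJ (K : Type*) [Field K] (n : ℕ) : Type _ := ↥(UTs K n)

theorem mem_UTs {K : Type*} [Field K] {n : ℕ} {a : Matrix (Fin n) (Fin n) K} :
    a ∈ UTs K n ↔ ∀ i j : Fin n, (j : ℕ) < (i : ℕ) → a i j = 0 := Iff.rfl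

theorem UTs_mul_mem {K : Type*} [Field K] {n : ℕ} {a b : Matrix (Fin n) (Fin n) K}
    (ha : a ∈ UTs K n) (hb : b ∈ UTs K n) : a * b ∈ UTs K n := by
  rw [mem_UTs] at ha hb ⊢
  intro i j h
  rw [Matrix.mul_apply]
  apply Finset.sum_eq_zero
  intro k _
  rcases lt_or_ge (k : ℕ) (i : ℕ) with hk | hk
  · rw [ha i k hk, zero_mul]
  · rw [hb k j (lt_of_lt_of_le h hk), mul_zero]

/-- The Jordan product `x ∘ y = xy + yx` on upper triangular matrices. -/
def jmul {K : Type*} [Field K] {n : ℕ} (x y : UJ K n) : UJ K n :=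
  ⟨x.1 * y.1 + y.1 * x.1, (UTs K n).add_mem (UTs_mul_mem x.2 y.2) (UTs_mul_mem y.2 x.2)⟩

/-- The matrix unit `e_{ij}` (with `i ≤ j`) as an element of `UJ K n`. -/
def Eu (K : Type*) [Field K] {n : ℕ} (i j : Fin n) (h : i ≤ j) : UJ K n :=
  ⟨Matrix.single i j 1, by
    rw [mem_UTs]
    intro a b hab
    by_cases h1 : i = a ∧ j = b
    · exfalso
      rcases h1 with ⟨rfl, rfl⟩
      exact absurd hab (not_lt.mpr h)
    · simp only [Matrix.single, Matrix.of_apply, if_neg h1]⟩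

/-- `Y⁺_{i:m} = e_{i:m} + e_{−i:m}` (`0`-based index `i`, `i + m < n`). -/
def Yp (K : Type*) [Field K] {n : ℕ} (i m : ℕ) (h : i + m < n) : UJ K n :=
  Eu K ⟨i, by omega⟩ ⟨i + m, h⟩ (Fin.mk_le_mk.mpr (by omega)) +
  Eu K ⟨n - 1 - i - m, by omega⟩ ⟨n - 1 - i, by omega⟩ (Fin.mk_le_mk.mpr (by omega))

/-- `Y⁻_{i:m} = e_{i:m} − e_{−i:m}` (`0`-based index `i`, `i + m < n`). -/
def Ym (K : Type*) [Field K] {n : ℕ} (i m : ℕ) (h : i + m < n) : UJ K n :=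
  Eu K ⟨i, by omega⟩ ⟨i + m, h⟩ (Fin.mk_le_mk.mpr (by omega)) -
  Eu K ⟨n - 1 - i - m, by omega⟩ ⟨n - 1 - i, by omega⟩ (Fin.mk_le_mk.mpr (by omega))

/-- A `G`-grading on the Jordan algebra `UJ K n`: a direct sum decomposition into
`K`-subspaces `comp g` with `comp g ∘ comp h ⊆ comp (g * h)`. -/
structure UJGrading (K : Type*) [Field K] (n : ℕ) (G : Type*) [Group G] where
  comp : G → Submodule K (UJ K n)
  indep : iSupIndep comp
  sup_top : (⨆ g, comp g) = ⊤
  jmul_mem : ∀ (g h : G) (x y : UJ K n), x ∈ comp g → y ∈ comp h → jmul x y ∈ comp (g * h)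

/-- A graded isomorphism between two families of components: a bijective linear map
preserving the Jordan product and mapping each component onto the corresponding one. -/
def GradedIso {K : Type*} [Field K] {n : ℕ} {G : Type*} [Group G]
    (A A' : G → Submodule K (UJ K n)) : Prop :=
  ∃ ψ : UJ K n ≃ₗ[K] UJ K n,
    (∀ x y, ψ (jmul x y) = jmul (ψ x) (ψ y)) ∧
    ∀ g, (A g).map (ψ : UJ K n →ₗ[K] UJ K n) = A' g

/-- A family of components is elementary if every matrix unit is homogeneous. -/
def IsElementaryFam {K : Type*} [Field K] {n : ℕ} {G : Type*} [Group G]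
    (A : G → Submodule K (UJ K n)) : Prop :=
  ∀ (i j : Fin n) (h : i ≤ j), ∃ g, Eu K i j h ∈ A g

/-- A family of components is of mirror type (MT) if every nonzero `Y⁺_{i:m}`, `Y⁻_{i:m}`
is homogeneous, and their degrees differ whenever both are nonzero. -/
def IsMTFam {K : Type*} [Field K] {n : ℕ} {G : Type*} [Group G]
    (A : G → Submodule K (UJ K n)) : Prop :=
  ∀ (i m : ℕ) (h : i + m < n),
    (Yp K i m h ≠ 0 → ∃ g, Yp K i m h ∈ A g) ∧
    (Ym K i m h ≠ 0 → ∃ g, Ym K i m h ∈ A g) ∧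
    (Yp K i m h ≠ 0 → Ym K i m h ≠ 0 →
      ∀ g g' : G, Yp K i m h ∈ A g → Ym K i m h ∈ A g' → g ≠ g')

/-- The degree of the matrix unit `e_{ij}` in the elementary grading defined by `η`:
`g_i g_{i+1} ⋯ g_{j-1}`. -/
def elemDeg {n : ℕ} (G : Type*) [CommGroup G] (η : Fin (n - 1) → G) (i j : Fin n) : G :=
  ∏ k ∈ (Finset.Ico (i : ℕ) (j : ℕ)).attach,
    η ⟨k.1, by have hk := Finset.mem_Ico.mp k.2; have hj := j.isLt; omega⟩

/-- The components of the elementary grading `(UJ_n, η)`. -/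
def elemComp (K : Type*) [Field K] {n : ℕ} {G : Type*} [CommGroup G]
    (η : Fin (n - 1) → G) (g : G) : Submodule K (UJ K n) :=
  Submodule.span K {x : UJ K n | ∃ (i j : Fin n) (h : i ≤ j), elemDeg G η i j = g ∧ x = Eu K i j h}

/-- The degree of `Y⁺_{i:m}` in the MT grading determined by `η ∈ G^{⌈(n-1)/2⌉}`. -/
def mtDeg {n : ℕ} (G : Type*) [CommGroup G] (η : Fin (n / 2) → G)
    (i m : ℕ) (h : i + m < n) : G :=
  ∏ k ∈ (Finset.range m).attach,
    η ⟨min (i + k.1) (n - 2 - (i + k.1)), by have hk := Finset.mem_range.mp k.2; omega⟩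

/-- The components of the MT grading `(UJ_n, t, η)`:
`deg Y⁺_{i:m}` is `mtDeg η i m` and `deg Y⁻_{i:m} = t ⬝ mtDeg η i m`. -/
def mtComp (K : Type*) [Field K] {n : ℕ} {G : Type*} [CommGroup G]
    (t : G) (η : Fin (n / 2) → G) (g : G) : Submodule K (UJ K n) :=
  Submodule.span K {x : UJ K n |
    (∃ (i m : ℕ) (h : i + m < n), mtDeg G η i m h = g ∧ x = Yp K i m h) ∨
    (∃ (i m : ℕ) (h : i + m < n), t * mtDeg G η i m h = g ∧ x = Ym K i m h)}

/-- The set `𝒯_m` of permutations that strictly decrease to the value `0` and then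
strictly increase. -/
def TT (m : ℕ) : Set (Equiv.Perm (Fin m)) :=
  {σ | ∃ t : Fin m, (σ t : ℕ) = 0 ∧
    (∀ a b : Fin m, a < b → b ≤ t → σ b < σ a) ∧
    (∀ a b : Fin m, t ≤ a → a < b → σ a < σ b)}

/-- The left-normed Jordan product of a list of elements (`0` for the empty list). -/
def jprod {K : Type*} [Field K] {n : ℕ} : List (UJ K n) → UJ K n
  | [] => 0
  | x :: xs => xs.foldl jmul x

/-- The `k`-th left-normed Jordan power `x ∘ x ∘ ⋯ ∘ x` (`k` factors, `0` for `k = 0`). -/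
def jpow {K : Type*} [Field K] {n : ℕ} (x : UJ K n) : ℕ → UJ K n
  | 0 => 0
  | 1 => x
  | (k + 2) => jmul (jpow x (k + 1)) x

/-!
Write `Y^s(a, b) = e_{ab} + s e_{b̄ā}` with `x̄ = n - 1 - x` the mirror index, so that
`Y^±_{i:m} = Y^{±1}(i, i + m)`. Multiplying matrix units gives
`Y^s(a, b) ∘ Y^t(b, c) = κ Y^{st}(a, c)` with `κ ∈ {1, 2}`, provided neither factor is the
vanishing element `Y^-(a, b)` (when `b̄ = a`) or `Y^-(b, c)` (when `c̄ = b`). So homogeneity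
with distinct `±`-degrees passes from `(a, b)` and `(b, c)` to `(a, c)`:
`deg Y^±(a, c) = deg Y^±(a, b) · deg Y^+(b, c)`, or `deg Y^+(a, b) · deg Y^±(b, c)` when
`Y^-(a, b) = 0`. Induction on `m` from the cases `m ≤ 1` finishes the proof.
-/

def mirrorY (K : Type*) [Field K] {n : ℕ} (s : K) (a b : Fin n) (hab : a ≤ b) : UJ K n :=
  Eu K a b hab + s • Eu K b.rev a.rev (Fin.rev_le_rev.mpr hab)

section MirrorPairs

variable {K : Type*} [Field K] {n : ℕ}

lemma coe_mirrorY (s : K) (a b : Fin n) (hab : a ≤ b) :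
    (mirrorY K s a b hab : Matrix (Fin n) (Fin n) K) = single a b 1 + s • single b.rev a.rev 1 :=
  rfl

lemma coe_Eu (a b : Fin n) (hab : a ≤ b) :
    (Eu K a b hab : Matrix (Fin n) (Fin n) K) = single a b 1 :=
  rfl

lemma coe_jmul (x y : UJ K n) : (jmul x y : Matrix (Fin n) (Fin n) K) = x * y + y * x :=
  rfl

lemma single_one_mul_single_one (i j k l : Fin n) :
    (single i j (1 : K)) * single k l 1 = if j = k then single i l 1 else 0 := by
  split_ifs with h
  · subst h; simp
  · exact single_mul_single_of_ne 1 i j k h 1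

lemma jmul_mirrorY {a b c : Fin n} (hab : a ≤ b) (hbc : b ≤ c) (hac : a ≠ c) {s t : K}
    (hs : b.rev = a → s = 1) (ht : c.rev = b → t = 1) :
    jmul (mirrorY K s a b hab) (mirrorY K t b c hbc) =
      (if b.rev = a ∨ c.rev = b then 2 else 1 : K) • mirrorY K (s * t) a c (hab.trans hbc) := by
  apply Subtype.ext
  simp only [coe_jmul, Submodule.coe_smul, coe_mirrorY, add_mul, mul_add, smul_mul_assoc,
    mul_smul_comm, single_one_mul_single_one]
  by_cases hB : b.rev = a
  · obtain rfl := hs hB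
    subst hB
    simp (disch := simp only [ne_eq, Fin.ext_iff, Fin.le_def, Fin.val_rev] at *; omega) only
      [Fin.rev_rev, if_neg, true_or, if_true]
    module
  by_cases hC : c.rev = b
  · obtain rfl := ht hC
    subst hC
    simp (disch := simp only [ne_eq, Fin.ext_iff, Fin.le_def, Fin.val_rev] at *; omega) only
      [Fin.rev_rev, if_neg, or_true, if_true]
    module
  · simp (disch := simp only [ne_eq, Fin.ext_iff, Fin.le_def, Fin.val_rev] at *; omega) only
      [if_neg, if_true]
    module

lemma mirrorY_eq_zero_iff (s : K) (a b : Fin n) (hab : a ≤ b) :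
    mirrorY K s a b hab = 0 ↔ b.rev = a ∧ s = -1 := by
  constructor
  · intro h0
    have hrev : a.rev = b ↔ b.rev = a := by rw [Fin.rev_eq_iff, eq_comm]
    have hab0 : (1 : K) + (if b.rev = a then s else 0) = 0 := by
      simpa [coe_mirrorY, single_apply, hrev]
        using congr(($h0 : Matrix (Fin n) (Fin n) K) a b)
    split_ifs at hab0 with hB
    · exact ⟨hB, by linear_combination hab0⟩
    · simp at hab0
  · rintro ⟨rfl, rfl⟩
    apply Subtype.ext
    simp [coe_mirrorY]

lemma mirrorY_one_ne_zero (h2 : (2 : K) ≠ 0) (a b : Fin n) (hab : a ≤ b) :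
    mirrorY K 1 a b hab ≠ 0 := by
  rw [ne_eq, mirrorY_eq_zero_iff]
  exact fun ⟨_, h⟩ => h2 (by linear_combination h)

lemma Yp_eq_mirrorY (i m : ℕ) (h : i + m < n) :
    Yp K i m h = mirrorY K 1 ⟨i, by omega⟩ ⟨i + m, h⟩ (Fin.mk_le_mk.mpr (by omega)) := by
  apply Subtype.ext
  simp only [Yp, Submodule.coe_add, coe_Eu, coe_mirrorY, one_smul]
  congr 2 <;> ext <;> simp only [Fin.val_rev] <;> omega

lemma Ym_eq_mirrorY (i m : ℕ) (h : i + m < n) :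
    Ym K i m h = mirrorY K (-1) ⟨i, by omega⟩ ⟨i + m, h⟩ (Fin.mk_le_mk.mpr (by omega)) := by
  apply Subtype.ext
  simp only [Ym, Submodule.coe_sub, coe_Eu, coe_mirrorY, neg_one_smul, ← sub_eq_add_neg]
  congr 2 <;> ext <;> simp only [Fin.val_rev] <;> omega

end MirrorPairs

section Grading

variable {K : Type*} [Field K] {n : ℕ} {G : Type*}

lemma UJGrading.eq_of_mem_comp [Group G] (A : UJGrading K n G) {x : UJ K n} (hx : x ≠ 0)
    {g g' : G} (hg : x ∈ A.comp g) (hg' : x ∈ A.comp g') : g = g' := by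
  by_contra hne
  exact hx ((Submodule.disjoint_def.mp (A.indep.pairwiseDisjoint hne)) x hg hg')

lemma UJGrading.mirrorY_mem_comp_mul [Group G] (A : UJGrading K n G) (h2 : (2 : K) ≠ 0)
    {a b c : Fin n} (hab : a ≤ b) (hbc : b ≤ c) (hac : a ≠ c) {s t : K}
    (hs : b.rev = a → s = 1) (ht : c.rev = b → t = 1) {g g' : G}
    (hg : mirrorY K s a b hab ∈ A.comp g) (hg' : mirrorY K t b c hbc ∈ A.comp g') :
    mirrorY K (s * t) a c (hab.trans hbc) ∈ A.comp (g * g') := by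
  have hmul := A.jmul_mem g g' _ _ hg hg'
  rw [jmul_mirrorY hab hbc hac hs ht] at hmul
  refine (Submodule.smul_mem_iff _ ?_).mp hmul
  split_ifs <;> simp [h2]

def IsMTPair (A : G → Submodule K (UJ K n)) (a b : Fin n) (hab : a ≤ b) : Prop :=
  (mirrorY K 1 a b hab ≠ 0 → ∃ g, mirrorY K 1 a b hab ∈ A g) ∧
  (mirrorY K (-1) a b hab ≠ 0 → ∃ g, mirrorY K (-1) a b hab ∈ A g) ∧
  (mirrorY K 1 a b hab ≠ 0 → mirrorY K (-1) a b hab ≠ 0 →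
    ∀ g g' : G, mirrorY K 1 a b hab ∈ A g → mirrorY K (-1) a b hab ∈ A g' → g ≠ g')

lemma isMTPair_mk_iff (A : G → Submodule K (UJ K n)) (i m : ℕ) (h : i + m < n) :
    IsMTPair A ⟨i, by omega⟩ ⟨i + m, h⟩ (Fin.mk_le_mk.mpr (by omega)) ↔
      (Yp K i m h ≠ 0 → ∃ g, Yp K i m h ∈ A g) ∧
      (Ym K i m h ≠ 0 → ∃ g, Ym K i m h ∈ A g) ∧
      (Yp K i m h ≠ 0 → Ym K i m h ≠ 0 →
        ∀ g g' : G, Yp K i m h ∈ A g → Ym K i m h ∈ A g' → g ≠ g') := by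
  rw [Yp_eq_mirrorY, Ym_eq_mirrorY]
  rfl

lemma IsMTPair.of_mem [Group G] {A : UJGrading K n G} {a b : Fin n} {hab : a ≤ b} {g : G}
    (hp : mirrorY K 1 a b hab ∈ A.comp g)
    (hm : mirrorY K (-1) a b hab ≠ 0 →
      ∃ g', mirrorY K (-1) a b hab ∈ A.comp g' ∧ g ≠ g') :
    IsMTPair A.comp a b hab := by
  refine ⟨fun _ => ⟨g, hp⟩, fun hm0 => (hm hm0).imp fun _ => And.left, ?_⟩
  intro hp0 hm0 g₁ g₂ hg₁ hg₂
  obtain ⟨g', hg', hne⟩ := hm hm0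
  rwa [A.eq_of_mem_comp hp0 hg₁ hp, A.eq_of_mem_comp hm0 hg₂ hg']

lemma IsMTPair.exists_mem_neg {A : G → Submodule K (UJ K n)} (h2 : (2 : K) ≠ 0) {a b : Fin n}
    {hab : a ≤ b} (hA : IsMTPair A a b hab) {g : G} (hp : mirrorY K 1 a b hab ∈ A g)
    (hm : mirrorY K (-1) a b hab ≠ 0) :
    ∃ g', mirrorY K (-1) a b hab ∈ A g' ∧ g ≠ g' := by
  obtain ⟨g', hg'⟩ := hA.2.1 hm
  exact ⟨g', hg', hA.2.2 (mirrorY_one_ne_zero h2 a b hab) hm g g' hp hg'⟩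

lemma IsMTPair.trans [Group G] {A : UJGrading K n G} (h2 : (2 : K) ≠ 0) {a b c : Fin n}
    {hab : a ≤ b} {hbc : b ≤ c} (hac : a ≠ c)
    (h₁ : IsMTPair A.comp a b hab) (h₂ : IsMTPair A.comp b c hbc) :
    IsMTPair A.comp a c (hab.trans hbc) := by
  obtain ⟨g, hg⟩ := h₁.1 (mirrorY_one_ne_zero h2 a b hab)
  obtain ⟨d, hd⟩ := h₂.1 (mirrorY_one_ne_zero h2 b c hbc)
  have hp := A.mirrorY_mem_comp_mul h2 hab hbc hac (fun _ => rfl) (fun _ => rfl) hg hd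
  rw [mul_one] at hp
  refine IsMTPair.of_mem hp fun _ => ?_
  by_cases hB : b.rev = a
  · have hC : c.rev ≠ b := fun hC => hac (by rw [← hB, ← hC, Fin.rev_rev])
    obtain ⟨d', hd', hdd'⟩ :=
      h₂.exists_mem_neg h2 hd (by simpa [mirrorY_eq_zero_iff] using hC)
    have hm :=
      A.mirrorY_mem_comp_mul h2 hab hbc hac (fun _ => rfl) (fun h => absurd h hC) hg hd'
    rw [one_mul] at hm
    exact ⟨g * d', hm, fun h => hdd' (mul_left_cancel h)⟩
  · obtain ⟨g', hg', hgg'⟩ :=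
      h₁.exists_mem_neg h2 hg (by simpa [mirrorY_eq_zero_iff] using hB)
    have hm :=
      A.mirrorY_mem_comp_mul h2 hab hbc hac (fun h => absurd h hB) (fun _ => rfl) hg' hd
    rw [mul_one] at hm
    exact ⟨g' * d, hm, fun h => hgg' (mul_right_cancel h)⟩

end Grading

theorem statement_14_general {K : Type*} [Field K] (h2 : (2 : K) ≠ 0)
    {n : ℕ} {G : Type*} [Group G]
    (A : UJGrading K n G)
    (h01 : ∀ (i m : ℕ) (h : i + m < n), m ≤ 1 →
      (Yp K i m h ≠ 0 → ∃ g, Yp K i m h ∈ A.comp g) ∧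
      (Ym K i m h ≠ 0 → ∃ g, Ym K i m h ∈ A.comp g) ∧
      (Yp K i m h ≠ 0 → Ym K i m h ≠ 0 →
        ∀ g g' : G, Yp K i m h ∈ A.comp g → Ym K i m h ∈ A.comp g' → g ≠ g')) :
    IsMTFam A.comp := by
  intro i m h
  rw [← isMTPair_mk_iff]
  induction m with
  | zero => exact (isMTPair_mk_iff _ i 0 h).mpr (h01 i 0 h (Nat.zero_le _))
  | succ m ih =>
    exact (ih (by omega)).trans h2 (by simp [Fin.ext_iff])
      ((isMTPair_mk_iff _ (i + m) 1 h).mpr (h01 (i + m) 1 h le_rfl))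

/-- If the elements `Y⁺_{i:m}`, `Y⁻_{i:m}` for `m = 0, 1` are homogeneous with
`deg Y⁺ ≠ deg Y⁻` where applicable, then the grading is MT. -/
theorem statement_14 {K : Type*} [Field K] (h2 : (2 : K) ≠ 0)
    {n : ℕ} (hn : 2 ≤ n) {G : Type*} [Group G]
    (A : UJGrading K n G)
    (h01 : ∀ (i m : ℕ) (h : i + m < n), m ≤ 1 →
      (Yp K i m h ≠ 0 → ∃ g, Yp K i m h ∈ A.comp g) ∧
      (Ym K i m h ≠ 0 → ∃ g, Ym K i m h ∈ A.comp g) ∧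
      (Yp K i m h ≠ 0 → Ym K i m h ≠ 0 →
        ∀ g g' : G, Yp K i m h ∈ A.comp g → Ym K i m h ∈ A.comp g' → g ≠ g')) :
    IsMTFam A.comp :=
  statement_14_general h2 A h01
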